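/- Let μ > 2, α < 0, and N a positive integer. Then there exists ω* > α²/N² such that the mass M(ω) = (N (μ+1)^{1/μ}/μ) ω^{1/μ − 1/2} ∫_{|α|/(N√ω)}^{1} (1 − t²)^{1/μ − 1} dt of the N-tail state satisfies M'(ω) > 0 for ω ∈ (α²/N², ω*) and M'(ω) < 0 for ω > ω*. In particular, in the supercritical regime μ > 2 the Vakhitov–Kolokolov condition holds precisely for frequencies below the threshold ω*. -/

import Mathlib

/-!
Write `p = 1/μ - 1`, `x = |α| / (N √ω)` and `F(x) = ∫_x^1 (1 - t²)^p dt` (`massIntegral`).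
Differentiating gives `M'(ω) = C ω^(p - 1/2) G(x)` with `C > 0` and
`G(x) = (p + 1/2) F(x) + (x/2) (1 - x²)^p` (`massDerivFactor`).
The two terms of `G'` combine to `-p (1 - x²)^(p-1) > 0`, so `G` is strictly increasing on
`(-1, 1)`. For `μ > 2` we have `p + 1/2 < 0`, hence `G(0) = (p + 1/2) F(0) < 0`, while `G → +∞`
as `x → 1⁻`.
So `G` has a unique zero `x* ∈ (0, 1)`; as `x` decreases in `ω`, the threshold is
`ω* = (|α| / (N x*))²`.
-/

open MeasureTheory Set intervalIntegral

/-- The squared `L²` norm (mass) of the `N`-tail stationary state `Ψ⁰_ω`, as a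
function of `ω`:
`M(ω) = (N (μ+1)^{1/μ}/μ) ω^{1/μ − 1/2} ∫_{|α|/(N√ω)}^{1} (1 − t²)^{1/μ − 1} dt`. -/
noncomputable def tailMass (μ α : ℝ) (N : ℕ) (ω : ℝ) : ℝ :=
  ((N : ℝ) * (μ + 1) ^ (1 / μ) / μ) * ω ^ (1 / μ - 1 / 2) *
    ∫ t in (|α| / (N * Real.sqrt ω))..1, (1 - t ^ 2) ^ (1 / μ - 1)

open Filter Topology

theorem intervalIntegrable_one_sub_sq_rpow {p x : ℝ} (hp : -1 < p) (hx : -1 < x) (hx1 : x ≤ 1) :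
    IntervalIntegrable (fun t : ℝ => (1 - t ^ 2) ^ p) volume x 1 := by
  have hsing : IntervalIntegrable (fun t : ℝ => (1 - t) ^ p) volume x 1 := by
    simpa using ((intervalIntegrable_rpow' (a := 0) (b := 1 - x) hp).comp_sub_left 1).symm
  have hreg : ContinuousOn (fun t : ℝ => (1 + t) ^ p) (uIcc x 1) := by
    rw [uIcc_of_le hx1]
    exact ContinuousOn.rpow_const (by fun_prop) fun t ht => Or.inl (by linarith [ht.1])
  refine (hsing.mul_continuousOn hreg).congr fun t ht => ?_
  rw [uIoc_of_le hx1] at ht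
  rw [← Real.mul_rpow (by linarith [ht.2]) (by linarith [ht.1])]
  ring_nf

noncomputable def massIntegral (p x : ℝ) : ℝ :=
  ∫ t in x..1, (1 - t ^ 2) ^ p

theorem massIntegral_pos {p x : ℝ} (hp : -1 < p) (hx : -1 < x) (hx1 : x < 1) :
    0 < massIntegral p x :=
  intervalIntegral_pos_of_pos_on (intervalIntegrable_one_sub_sq_rpow hp hx hx1.le)
    (fun t ht => Real.rpow_pos_of_pos (by nlinarith [ht.1, ht.2]) p) hx1

theorem continuousOn_one_sub_sq_rpow (p : ℝ) :
    ContinuousOn (fun t : ℝ => (1 - t ^ 2) ^ p) (Ioo (-1) 1) :=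
  ContinuousOn.rpow_const (by fun_prop) fun t ht => Or.inl (by nlinarith [ht.1, ht.2])

theorem hasDerivAt_massIntegral {p x : ℝ} (hp : -1 < p) (hx : x ∈ Ioo (-1) 1) :
    HasDerivAt (massIntegral p) (-(1 - x ^ 2) ^ p) x :=
  integral_hasDerivAt_left (intervalIntegrable_one_sub_sq_rpow hp hx.1 hx.2.le)
    ((continuousOn_one_sub_sq_rpow p).stronglyMeasurableAtFilter isOpen_Ioo x hx)
    ((continuousOn_one_sub_sq_rpow p).continuousAt (isOpen_Ioo.mem_nhds hx))

theorem tendsto_massIntegral_nhdsLT_one {p : ℝ} (hp : -1 < p) :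
    Tendsto (massIntegral p) (𝓝[<] 1) (𝓝 0) := by
  have hcont : ContinuousOn (massIntegral p) (uIcc 0 1) :=
    continuousOn_primitive_interval_left <| (intervalIntegrable_iff').mp <|
      intervalIntegrable_one_sub_sq_rpow hp (by norm_num) zero_le_one
  rw [uIcc_of_le zero_le_one] at hcont
  have h1 : massIntegral p 1 = 0 := integral_same
  exact h1 ▸ ((hcont 1 (right_mem_Icc.mpr zero_le_one)).mono_of_mem_nhdsWithin
    (Icc_mem_nhdsLT zero_lt_one)).tendsto

noncomputable def massDerivFactor (p x : ℝ) : ℝ :=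
  (p + 1 / 2) * massIntegral p x + x / 2 * (1 - x ^ 2) ^ p

theorem hasDerivAt_massDerivFactor {p x : ℝ} (hp : -1 < p) (hx : x ∈ Ioo (-1) 1) :
    HasDerivAt (massDerivFactor p) (-p * (1 - x ^ 2) ^ (p - 1)) x := by
  have hpos : 0 < 1 - x ^ 2 := by nlinarith [hx.1, hx.2]
  have hpow : HasDerivAt (fun y : ℝ => (1 - y ^ 2) ^ p)
      (-(2 * x) * p * (1 - x ^ 2) ^ (p - 1)) x :=
    (by simpa using (hasDerivAt_pow 2 x).const_sub 1 : HasDerivAt (fun y : ℝ => 1 - y ^ 2) _ x)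
      |>.rpow_const (Or.inl hpos.ne')
  refine (((hasDerivAt_massIntegral hp hx).const_mul (p + 1 / 2)).add
    (((hasDerivAt_id x).div_const 2).mul hpow)).congr_deriv ?_
  have hsplit : (1 - x ^ 2) ^ p = (1 - x ^ 2) ^ (p - 1) * (1 - x ^ 2) := by
    rw [← Real.rpow_add_one hpos.ne', sub_add_cancel]
  rw [hsplit, id]
  ring

theorem strictMonoOn_massDerivFactor {p : ℝ} (hp1 : -1 < p) (hp : p < 0) :
    StrictMonoOn (massDerivFactor p) (Ioo (-1) 1) := by
  refine strictMonoOn_of_deriv_pos (convex_Ioo _ _)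
    (fun x hx => (hasDerivAt_massDerivFactor hp1 hx).continuousAt.continuousWithinAt)
    fun x hx => ?_
  rw [interior_Ioo] at hx
  rw [(hasDerivAt_massDerivFactor hp1 hx).deriv]
  exact mul_pos (neg_pos.mpr hp) (Real.rpow_pos_of_pos (by nlinarith [hx.1, hx.2]) _)

theorem tendsto_massDerivFactor_nhdsLT_one {p : ℝ} (hp1 : -1 < p) (hp : p < 0) :
    Tendsto (massDerivFactor p) (𝓝[<] 1) atTop := by
  have hbase : Tendsto (fun x : ℝ => 1 - x ^ 2) (𝓝[<] 1) (𝓝[>] 0) := by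
    refine tendsto_nhdsWithin_of_tendsto_nhds_of_eventually_within _ ?_ ?_
    · have hcont : Continuous fun x : ℝ => 1 - x ^ 2 := by fun_prop
      simpa using (hcont.tendsto 1).mono_left nhdsWithin_le_nhds
    · filter_upwards [Ioo_mem_nhdsLT (show (0 : ℝ) < 1 by norm_num)] with x hx
      exact sub_pos.mpr (pow_lt_one₀ hx.1.le hx.2 two_ne_zero)
  have hpole : Tendsto (fun x : ℝ => x / 2 * (1 - x ^ 2) ^ p) (𝓝[<] 1) atTop :=
    Tendsto.pos_mul_atTop (C := 1 / 2) (by norm_num)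
      ((by fun_prop : Continuous fun x : ℝ => x / 2).tendsto' 1 _ (by norm_num)
        |>.mono_left nhdsWithin_le_nhds)
      ((tendsto_rpow_neg_nhdsGT_zero hp).comp hbase)
  exact ((tendsto_massIntegral_nhdsLT_one hp1).const_mul (p + 1 / 2)).add_atTop hpole
    |>.congr fun x => by simp [massDerivFactor]

theorem exists_massDerivFactor_eq_zero {p : ℝ} (hp1 : -1 < p) (hp : p < -1 / 2) :
    ∃ x ∈ Ioo 0 1, massDerivFactor p x = 0 := by
  have hneg : massDerivFactor p 0 < 0 := by
    simpa [massDerivFactor] using mul_neg_of_neg_of_pos (by linarith : p + 1 / 2 < 0)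
      (massIntegral_pos hp1 (by norm_num) zero_lt_one)
  obtain ⟨x₁, hpos, hx₁⟩ : ∃ x₁, 0 < massDerivFactor p x₁ ∧ x₁ ∈ Ioo 0 1 :=
    (((tendsto_massDerivFactor_nhdsLT_one hp1 (by linarith)).eventually_gt_atTop 0).and
      (Ioo_mem_nhdsLT zero_lt_one)).exists
  have hcont : ContinuousOn (massDerivFactor p) (Icc 0 x₁) := fun x hx =>
    (hasDerivAt_massDerivFactor hp1 ⟨by linarith [hx.1], by linarith [hx.2, hx₁.2]⟩)
      |>.continuousAt.continuousWithinAt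
  obtain ⟨x, hx, hx0⟩ := intermediate_value_Ioo hx₁.1.le hcont ⟨hneg, hpos⟩
  exact ⟨x, ⟨hx.1, hx.2.trans hx₁.2⟩, hx0⟩

theorem lt_div_sqrt_iff {a x ω : ℝ} (ha : 0 < a) (hx : 0 < x) (hω : 0 < ω) :
    x < a / √ω ↔ ω < (a / x) ^ 2 := by
  rw [lt_div_iff₀ (Real.sqrt_pos.2 hω), ← lt_div_iff₀' hx, Real.sqrt_lt' (div_pos ha hx)]

theorem div_sqrt_lt_iff {a x ω : ℝ} (ha : 0 ≤ a) (hx : 0 < x) (hω : 0 < ω) :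
    a / √ω < x ↔ (a / x) ^ 2 < ω := by
  rw [div_lt_iff₀ (Real.sqrt_pos.2 hω), ← div_lt_iff₀' hx,
    Real.lt_sqrt (div_nonneg ha hx.le)]

theorem div_sqrt_mem_Ioo {a ω : ℝ} (ha : 0 ≤ a) (hω : a ^ 2 < ω) :
    a / √ω ∈ Ioo (-1) 1 :=
  ⟨by linarith [div_nonneg ha (Real.sqrt_nonneg ω)],
    (div_sqrt_lt_iff ha one_pos ((sq_nonneg a).trans_lt hω)).2 (by rwa [div_one])⟩

theorem hasDerivAt_div_sqrt (a : ℝ) {ω : ℝ} (hω : 0 < ω) :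
    HasDerivAt (fun w => a / √w) (-(a / √ω) / (2 * ω)) ω := by
  have hsqrt : 0 < √ω := Real.sqrt_pos.2 hω
  refine ((hasDerivAt_const ω a).div (Real.hasDerivAt_sqrt hω.ne') hsqrt.ne').congr_deriv ?_
  field_simp
  rw [Real.sq_sqrt hω.le]
  ring

theorem hasDerivAt_rpow_mul_massIntegral {p a ω : ℝ} (hp : -1 < p) (ha : 0 ≤ a)
    (hω : a ^ 2 < ω) :
    HasDerivAt (fun w => w ^ (p + 1 / 2) * massIntegral p (a / √w))
      (ω ^ (p - 1 / 2) * massDerivFactor p (a / √ω)) ω := by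
  have hω0 : 0 < ω := (sq_nonneg a).trans_lt hω
  refine ((Real.hasDerivAt_rpow_const (Or.inl hω0.ne')).mul
    ((hasDerivAt_massIntegral hp (div_sqrt_mem_Ioo ha hω)).comp ω
      (hasDerivAt_div_sqrt a hω0))).congr_deriv ?_
  have hsplit : ω ^ (p + 1 / 2) = ω ^ (p - 1 / 2) * ω := by
    rw [← Real.rpow_add_one hω0.ne']
    ring_nf
  rw [massDerivFactor, hsplit, show p + 1 / 2 - 1 = p - 1 / 2 by ring, Function.comp_apply]
  field_simp

theorem deriv_tailMass {μ α ω : ℝ} {N : ℕ} (hμ : 0 < μ) (hω : α ^ 2 / N ^ 2 < ω) :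
    deriv (tailMass μ α N) ω = N * (μ + 1) ^ (1 / μ) / μ *
      (ω ^ (1 / μ - 1 - 1 / 2) * massDerivFactor (1 / μ - 1) (|α| / N / √ω)) := by
  have hform : tailMass μ α N = fun w => N * (μ + 1) ^ (1 / μ) / μ *
      (w ^ (1 / μ - 1 + 1 / 2) * massIntegral (1 / μ - 1) (|α| / N / √w)) := by
    funext w
    rw [tailMass, massIntegral, div_div, show 1 / μ - 1 + 1 / 2 = 1 / μ - 1 / 2 by ring,
      mul_assoc]
  rw [hform]
  refine ((hasDerivAt_rpow_mul_massIntegral ?_ (by positivity) ?_).const_mul _).deriv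
  · have : 0 < 1 / μ := by positivity
    linarith
  · rwa [div_pow, sq_abs]

theorem stmt_11 (μ α : ℝ) (hμ : 2 < μ) (hα : α < 0) (N : ℕ) (hN : 0 < N) :
    -- in the supercritical regime the Vakhitov–Kolokolov condition `M'(ω) > 0`
    -- holds precisely below a threshold frequency `ω*`
    ∃ ωstar : ℝ, ωstar > α ^ 2 / (N : ℝ) ^ 2 ∧
      (∀ ω : ℝ, α ^ 2 / (N : ℝ) ^ 2 < ω → ω < ωstar →
        0 < deriv (tailMass μ α N) ω) ∧
      (∀ ω : ℝ, ωstar < ω → deriv (tailMass μ α N) ω < 0) := by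
  have hμ0 : 0 < μ := by linarith
  have hp1 : -1 < 1 / μ - 1 := by linarith [one_div_pos.2 hμ0]
  have hp2 : 1 / μ - 1 < -1 / 2 := by linarith [one_div_lt_one_div_of_lt two_pos hμ]
  obtain ⟨xs, hxs, hzero⟩ := exists_massDerivFactor_eq_zero hp1 hp2
  have hmono := strictMonoOn_massDerivFactor hp1 (by linarith)
  have hxs' : xs ∈ Ioo (-1) 1 := ⟨by linarith [hxs.1], hxs.2⟩
  set a := |α| / (N : ℝ)
  have ha : 0 < a := div_pos (abs_pos.2 hα.ne) (Nat.cast_pos.2 hN)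
  have hthreshold : α ^ 2 / (N : ℝ) ^ 2 = a ^ 2 := by rw [div_pow, sq_abs]
  have hC : 0 < N * (μ + 1) ^ (1 / μ) / μ :=
    div_pos (mul_pos (Nat.cast_pos.2 hN) (Real.rpow_pos_of_pos (by linarith) _)) hμ0
  have hstar : a ^ 2 < (a / xs) ^ 2 :=
    pow_lt_pow_left₀ ((lt_div_iff₀ hxs.1).2 (mul_lt_of_lt_one_right ha hxs.2)) ha.le two_ne_zero
  rw [hthreshold]
  refine ⟨(a / xs) ^ 2, hstar, fun ω hω hωs => ?_, fun ω hωs => ?_⟩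
  · have hω0 : 0 < ω := (sq_nonneg a).trans_lt hω
    have hG : 0 < massDerivFactor (1 / μ - 1) (a / √ω) :=
      hzero ▸ hmono hxs' (div_sqrt_mem_Ioo ha.le hω) ((lt_div_sqrt_iff ha hxs.1 hω0).2 hωs)
    rw [deriv_tailMass hμ0 (hthreshold ▸ hω)]
    exact mul_pos hC (mul_pos (Real.rpow_pos_of_pos hω0 _) hG)
  · have hω : a ^ 2 < ω := hstar.trans hωs
    have hω0 : 0 < ω := (sq_nonneg a).trans_lt hω
    have hG : massDerivFactor (1 / μ - 1) (a / √ω) < 0 :=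
      hzero ▸ hmono (div_sqrt_mem_Ioo ha.le hω) hxs' ((div_sqrt_lt_iff ha.le hxs.1 hω0).2 hωs)
    rw [deriv_tailMass hμ0 (hthreshold ▸ hω)]
    exact mul_neg_of_pos_of_neg hC (mul_neg_of_pos_of_neg (Real.rpow_pos_of_pos hω0 _) hG)
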